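/- For every λ ∈ (−1/2, 0) ∪ (0, ∞) and every integer m ≥ 1, ‖C_{2m+1}^{(λ+1)}‖₂² − ‖C_1^{(λ+1)}‖₂² = Σ_{j=1}^{m} ((2j+1+λ)/(2λ²))·([C_{2j+1}^{(λ)}(1)]² + (2λ−1)·‖C_{2j+1}^{(λ)}‖₂²). -/

import Mathlib

open Real MeasureTheory Finset

/-- Gegenbauer polynomials `C_n^{(λ)}`: `C_0 = 1`, `C_1 = 2λx`, and
`n C_n(x) = 2(n+λ-1) x C_{n-1}(x) - (n+2λ-2) C_{n-2}(x)` for `n ≥ 2`. -/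
noncomputable def gegenbauer (lam : ℝ) : ℕ → ℝ → ℝ
  | 0, _ => 1
  | 1, x => 2 * lam * x
  | n + 2, x =>
      (2 * ((n : ℝ) + 1 + lam) * x * gegenbauer lam (n + 1) x
        - ((n : ℝ) + 2 * lam) * gegenbauer lam n x) / ((n : ℝ) + 2)

lemma geg_rec (lam : ℝ) (n : ℕ) (x : ℝ) :
    gegenbauer lam (n + 2) x =
      (2 * ((n : ℝ) + 1 + lam) * x * gegenbauer lam (n + 1) x
        - ((n : ℝ) + 2 * lam) * gegenbauer lam n x) / ((n : ℝ) + 2) := rfl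

lemma geg_rec' (lam : ℝ) (n : ℕ) (x : ℝ) :
    ((n : ℝ) + 2) * gegenbauer lam (n + 2) x =
      2 * ((n : ℝ) + 1 + lam) * x * gegenbauer lam (n + 1) x
        - ((n : ℝ) + 2 * lam) * gegenbauer lam n x := by
  rw [geg_rec]
  field_simp

lemma geg_cont (lam : ℝ) (n : ℕ) : Continuous (fun x => gegenbauer lam n x) := by
  have key : ∀ k : ℕ, Continuous (fun x => gegenbauer lam k x) ∧
      Continuous (fun x => gegenbauer lam (k + 1) x) := by
    intro k
    induction k with
    | zero =>
      constructor
      · show Continuous (fun _ : ℝ => (1 : ℝ)); exact continuous_const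
      · show Continuous (fun x : ℝ => 2 * lam * x); fun_prop
    | succ p ih =>
      refine ⟨ih.2, ?_⟩
      have hfun : (fun x => gegenbauer lam (p + 2) x) =
          fun x => (2 * ((p : ℝ) + 1 + lam) * x * gegenbauer lam (p + 1) x
            - ((p : ℝ) + 2 * lam) * gegenbauer lam p x) / ((p : ℝ) + 2) :=
        funext fun x => geg_rec lam p x
      rw [hfun]
      exact (((continuous_const.mul continuous_id').mul ih.2).sub
        (continuous_const.mul ih.1)).div_const _
  exact (key n).1

lemma geg_contig (lam : ℝ) (hpos : ∀ k : ℕ, (0:ℝ) < (k : ℝ) + 2 + lam) :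
    ∀ n : ℕ, ∀ x : ℝ,
      lam * (gegenbauer (lam + 1) (n + 2) x - gegenbauer (lam + 1) n x)
        = ((n : ℝ) + 2 + lam) * gegenbauer lam (n + 2) x := by
  have key : ∀ n : ℕ,
      (∀ x : ℝ, lam * (gegenbauer (lam + 1) (n + 2) x - gegenbauer (lam + 1) n x)
        = ((n : ℝ) + 2 + lam) * gegenbauer lam (n + 2) x) ∧
      (∀ x : ℝ, lam * (gegenbauer (lam + 1) (n + 3) x - gegenbauer (lam + 1) (n + 1) x)
        = ((n : ℝ) + 3 + lam) * gegenbauer lam (n + 3) x) := by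
    intro n
    induction n with
    | zero =>
      constructor
      · intro x
        simp only [gegenbauer]
        push_cast
        ring
      · intro x
        simp only [gegenbauer]
        push_cast
        ring
    | succ k ih =>
      refine ⟨fun x => by
        have h := ih.2 x
        convert h using 3 <;> push_cast <;> ring, fun x => ?_⟩
      -- prove for index k+4 (i.e. n = k+2)
      have E2 := geg_rec' (lam + 1) (k + 2) x
      have E1 := geg_rec' (lam + 1) k x
      have EC := geg_rec' lam (k + 2) x
      have I1 := ih.1 x
      have I2 := ih.2 x
      have hne : ((k : ℝ) + 4) * ((k : ℝ) + 2 + lam) ≠ 0 := by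
        have := hpos k
        positivity
      have keyeq : ((k : ℝ) + 4) * ((k : ℝ) + 2 + lam) *
          (lam * (gegenbauer (lam + 1) (k + 4) x - gegenbauer (lam + 1) (k + 2) x))
          = ((k : ℝ) + 4) * ((k : ℝ) + 2 + lam) *
            (((k : ℝ) + 4 + lam) * gegenbauer lam (k + 4) x) := by
        push_cast at E2 E1 EC I1 I2 ⊢
        linear_combination
          ((k : ℝ) + 2 + lam) * lam * E2
          + 2 * x * ((k : ℝ) + 2 + lam) * ((k : ℝ) + 4 + lam) * I2
          - lam * ((k : ℝ) + 4 + lam) * E1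
          - ((k : ℝ) + 2 + lam) * ((k : ℝ) + 4 + lam) * EC
          - ((k : ℝ) + 2 + 2 * lam) * ((k : ℝ) + 4 + lam) * I1
      have := mul_left_cancel₀ hne keyeq
      convert this using 2 <;> push_cast <;> ring
  exact fun n => (key n).1

lemma geg_deriv (lam : ℝ) (hpos : ∀ k : ℕ, (0:ℝ) < (k : ℝ) + 2 + lam) :
    ∀ n : ℕ, ∀ x : ℝ,
      HasDerivAt (fun y => gegenbauer lam (n + 1) y)
        (2 * lam * gegenbauer (lam + 1) n x) x := by
  have key : ∀ n : ℕ,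
      (∀ x : ℝ, HasDerivAt (fun y => gegenbauer lam (n + 1) y)
        (2 * lam * gegenbauer (lam + 1) n x) x) ∧
      (∀ x : ℝ, HasDerivAt (fun y => gegenbauer lam (n + 2) y)
        (2 * lam * gegenbauer (lam + 1) (n + 1) x) x) := by
    intro n
    induction n with
    | zero =>
      constructor
      · intro x
        have h : HasDerivAt (fun y : ℝ => 2 * lam * y) (2 * lam) x := by
          simpa using (hasDerivAt_id x).const_mul (2 * lam)
        have hfun : (fun y : ℝ => gegenbauer lam 1 y) = fun y : ℝ => 2 * lam * y := by
          funext y; simp [gegenbauer]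
        rw [hfun]
        convert h using 1
        simp [gegenbauer]
      · intro x
        have hfun : (fun y : ℝ => gegenbauer lam 2 y) =
            fun y : ℝ => (2 * (1 + lam) * y * (2 * lam * y) - 2 * lam) / 2 := by
          funext y
          rw [geg_rec lam 0]
          simp [gegenbauer]
        rw [hfun]
        have h : HasDerivAt (fun y : ℝ => (2 * (1 + lam) * y * (2 * lam * y) - 2 * lam) / 2)
            ((2 * (1 + lam) * (2 * lam * x) + 2 * (1 + lam) * x * (2 * lam)) / 2) x := by
          have h1 : HasDerivAt (fun y : ℝ => 2 * (1 + lam) * y) (2 * (1 + lam)) x := by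
            simpa using (hasDerivAt_id x).const_mul (2 * (1 + lam))
          have h2 : HasDerivAt (fun y : ℝ => 2 * lam * y) (2 * lam) x := by
            simpa using (hasDerivAt_id x).const_mul (2 * lam)
          have := (h1.mul h2).sub_const (2 * lam)
          have := this.div_const 2
          convert this using 1
          iterate 3 rfl
          try ring
        convert h using 1
        simp [gegenbauer]
        try ring
    | succ k ih =>
      refine ⟨ih.2, fun x => ?_⟩
      have hfun : (fun y => gegenbauer lam (k + 3) y) =
          fun y => (2 * ((k : ℝ) + 2 + lam) * y * gegenbauer lam (k + 2) y
            - ((k : ℝ) + 1 + 2 * lam) * gegenbauer lam (k + 1) y) / ((k : ℝ) + 3) := by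
        funext y
        rw [geg_rec lam (k + 1)]
        push_cast
        ring_nf
      rw [hfun]
      have h1 : HasDerivAt (fun y : ℝ => 2 * ((k : ℝ) + 2 + lam) * y)
          (2 * ((k : ℝ) + 2 + lam)) x := by
        simpa using (hasDerivAt_id x).const_mul (2 * ((k : ℝ) + 2 + lam))
      have h2 := h1.mul (ih.2 x)
      have h3 := (ih.1 x).const_mul ((k : ℝ) + 1 + 2 * lam)
      have h4 := (h2.sub h3).div_const ((k : ℝ) + 3)
      convert h4 using 1
      iterate 3 rfl
      rw [eq_div_iff (by positivity : ((k : ℝ) + 3) ≠ 0)]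
      have E1 := geg_rec' (lam + 1) k x
      have I1 := geg_contig lam hpos k x
      push_cast at E1 I1 ⊢
      linear_combination 2 * lam * E1 + 2 * I1
  exact fun n => (key n).1

lemma geg_step (lam : ℝ) (h0 : lam ≠ 0) (hpos : ∀ k : ℕ, (0:ℝ) < (k : ℝ) + 2 + lam) (k : ℕ) :
    (∫ x in (0:ℝ)..1, (gegenbauer (lam + 1) (k + 2) x) ^ 2)
      - (∫ x in (0:ℝ)..1, (gegenbauer (lam + 1) k x) ^ 2)
    = (((k : ℝ) + 2 + lam) / (2 * lam ^ 2)) *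
        ((gegenbauer lam (k + 2) 1) ^ 2
          + (2 * lam - 1) * ∫ x in (0:ℝ)..1, (gegenbauer lam (k + 2) x) ^ 2) := by
  have hcpos : (0:ℝ) < (k : ℝ) + 2 + lam := hpos k
  -- pointwise identity for the difference of squares
  have hsum : ∀ x : ℝ, gegenbauer (lam + 1) (k + 2) x + gegenbauer (lam + 1) k x
      = 2 * x * gegenbauer (lam + 1) (k + 1) x + gegenbauer lam (k + 2) x := by
    intro x
    have E1 := geg_rec' (lam + 1) k x
    have I1 := geg_contig lam hpos k x
    have hne : ((k : ℝ) + 2 + lam) ≠ 0 := ne_of_gt hcpos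
    have keyeq : ((k : ℝ) + 2 + lam) *
        (gegenbauer (lam + 1) (k + 2) x + gegenbauer (lam + 1) k x)
        = ((k : ℝ) + 2 + lam) *
          (2 * x * gegenbauer (lam + 1) (k + 1) x + gegenbauer lam (k + 2) x) := by
      linear_combination E1 + I1
    exact mul_left_cancel₀ hne keyeq
  have hdiff : ∀ x : ℝ, gegenbauer (lam + 1) (k + 2) x - gegenbauer (lam + 1) k x
      = (((k : ℝ) + 2 + lam) / lam) * gegenbauer lam (k + 2) x := by
    intro x
    have I1 := geg_contig lam hpos k x
    field_simp
    linear_combination I1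
  have hpt : ∀ x : ℝ, (gegenbauer (lam + 1) (k + 2) x) ^ 2 - (gegenbauer (lam + 1) k x) ^ 2
      = (((k : ℝ) + 2 + lam) / lam) *
        (2 * (x * gegenbauer lam (k + 2) x * gegenbauer (lam + 1) (k + 1) x)
          + (gegenbauer lam (k + 2) x) ^ 2) := by
    intro x
    have h := congrArg₂ (· * ·) (hdiff x) (hsum x)
    calc (gegenbauer (lam + 1) (k + 2) x) ^ 2 - (gegenbauer (lam + 1) k x) ^ 2
        = (gegenbauer (lam + 1) (k + 2) x - gegenbauer (lam + 1) k x) *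
          (gegenbauer (lam + 1) (k + 2) x + gegenbauer (lam + 1) k x) := by ring
      _ = (((k : ℝ) + 2 + lam) / lam) * gegenbauer lam (k + 2) x *
          (2 * x * gegenbauer (lam + 1) (k + 1) x + gegenbauer lam (k + 2) x) := h
      _ = (((k : ℝ) + 2 + lam) / lam) *
          (2 * (x * gegenbauer lam (k + 2) x * gegenbauer (lam + 1) (k + 1) x)
            + (gegenbauer lam (k + 2) x) ^ 2) := by ring
  -- integrability facts
  have hcC : Continuous (fun x => gegenbauer lam (k + 2) x) := geg_cont lam (k + 2)
  have hcA1 : Continuous (fun x => gegenbauer (lam + 1) (k + 1) x) := geg_cont (lam + 1) (k + 1)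
  have hcA2 : Continuous (fun x => gegenbauer (lam + 1) (k + 2) x) := geg_cont (lam + 1) (k + 2)
  have hcA0 : Continuous (fun x => gegenbauer (lam + 1) k x) := geg_cont (lam + 1) k
  have hIntJ : IntervalIntegrable (fun x => (gegenbauer lam (k + 2) x) ^ 2) volume 0 1 :=
    (hcC.pow 2).intervalIntegrable 0 1
  have hIntK : IntervalIntegrable
      (fun x => x * gegenbauer lam (k + 2) x * gegenbauer (lam + 1) (k + 1) x) volume 0 1 :=
    ((continuous_id'.mul hcC).mul hcA1).intervalIntegrable 0 1
  set J : ℝ := ∫ x in (0:ℝ)..1, (gegenbauer lam (k + 2) x) ^ 2 with hJ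
  set K : ℝ := ∫ x in (0:ℝ)..1, x * gegenbauer lam (k + 2) x * gegenbauer (lam + 1) (k + 1) x
    with hK
  -- FTC on x * C(x)^2
  have hFTC : (∫ x in (0:ℝ)..1, ((gegenbauer lam (k + 2) x) ^ 2
      + 4 * lam * (x * gegenbauer lam (k + 2) x * gegenbauer (lam + 1) (k + 1) x)))
      = (gegenbauer lam (k + 2) 1) ^ 2 := by
    have hder : ∀ x ∈ Set.uIcc (0:ℝ) 1,
        HasDerivAt (fun y => y * (gegenbauer lam (k + 2) y) ^ 2)
          ((gegenbauer lam (k + 2) x) ^ 2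
            + 4 * lam * (x * gegenbauer lam (k + 2) x * gegenbauer (lam + 1) (k + 1) x)) x := by
      intro x _
      have hC' := geg_deriv lam hpos (k + 1) x
      have h := (hasDerivAt_id x).mul (hC'.pow 2)
      simp only [id_eq] at h
      convert h using 1
      iterate 3 rfl
      simp only [Pi.pow_apply]
      ring
    have hInt : IntervalIntegrable (fun x => (gegenbauer lam (k + 2) x) ^ 2
        + 4 * lam * (x * gegenbauer lam (k + 2) x * gegenbauer (lam + 1) (k + 1) x))
        volume 0 1 :=
      ((hcC.pow 2).add (continuous_const.mul ((continuous_id'.mul hcC).mul hcA1))).intervalIntegrable 0 1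
    have := intervalIntegral.integral_eq_sub_of_hasDerivAt hder hInt
    rw [this]
    ring
  have hsplit : (∫ x in (0:ℝ)..1, ((gegenbauer lam (k + 2) x) ^ 2
      + 4 * lam * (x * gegenbauer lam (k + 2) x * gegenbauer (lam + 1) (k + 1) x)))
      = J + 4 * lam * K := by
    rw [intervalIntegral.integral_add hIntJ (hIntK.const_mul (4 * lam)),
      intervalIntegral.integral_const_mul]
  have hKval : J + 4 * lam * K = (gegenbauer lam (k + 2) 1) ^ 2 := by
    rw [← hsplit]; exact hFTC
  -- rewrite LHS
  have hLHS : (∫ x in (0:ℝ)..1, (gegenbauer (lam + 1) (k + 2) x) ^ 2)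
      - (∫ x in (0:ℝ)..1, (gegenbauer (lam + 1) k x) ^ 2)
      = (((k : ℝ) + 2 + lam) / lam) * (2 * K + J) := by
    rw [← intervalIntegral.integral_sub (f := fun x => (gegenbauer (lam + 1) (k + 2) x) ^ 2)
      (g := fun x => (gegenbauer (lam + 1) k x) ^ 2) ((hcA2.pow 2).intervalIntegrable 0 1)
      ((hcA0.pow 2).intervalIntegrable 0 1)]
    have : (∫ x in (0:ℝ)..1, ((gegenbauer (lam + 1) (k + 2) x) ^ 2
        - (gegenbauer (lam + 1) k x) ^ 2))
        = ∫ x in (0:ℝ)..1, (((k : ℝ) + 2 + lam) / lam) *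
          (2 * (x * gegenbauer lam (k + 2) x * gegenbauer (lam + 1) (k + 1) x)
            + (gegenbauer lam (k + 2) x) ^ 2) := by
      apply intervalIntegral.integral_congr
      intro x _
      exact hpt x
    rw [this, intervalIntegral.integral_const_mul,
      intervalIntegral.integral_add (hIntK.const_mul 2) hIntJ,
      intervalIntegral.integral_const_mul]
  rw [hLHS]
  have h4 : (4 : ℝ) * lam ≠ 0 := by simp [h0]
  have hKv : K = ((gegenbauer lam (k + 2) 1) ^ 2 - J) / (4 * lam) := by
    field_simp
    linarith [hKval]
  rw [hKv]
  field_simp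
  ring

theorem gegenbauer_telescoping_odd (lam : ℝ)
    (hlam : lam ∈ Set.Ioo (-(1/2) : ℝ) 0 ∪ Set.Ioi (0 : ℝ)) (m : ℕ) (hm : 1 ≤ m) :
    (∫ x in (0:ℝ)..1, (gegenbauer (lam + 1) (2 * m + 1) x) ^ 2)
      - (∫ x in (0:ℝ)..1, (gegenbauer (lam + 1) 1 x) ^ 2) =
    ∑ j ∈ Finset.Icc 1 m,
      ((2 * (j : ℝ) + 1 + lam) / (2 * lam ^ 2))
        * ((gegenbauer lam (2 * j + 1) 1) ^ 2
            + (2 * lam - 1) * (∫ x in (0:ℝ)..1, (gegenbauer lam (2 * j + 1) x) ^ 2)) := by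
  have h0 : lam ≠ 0 := by
    rcases hlam with h | h
    · exact ne_of_lt h.2
    · exact ne_of_gt h
  have hgt : -(1/2 : ℝ) < lam := by
    rcases hlam with h | h
    · exact h.1
    · linarith [Set.mem_Ioi.mp h]
  have hpos : ∀ k : ℕ, (0:ℝ) < (k : ℝ) + 2 + lam := by
    intro k
    have : (0:ℝ) ≤ (k : ℝ) := Nat.cast_nonneg k
    linarith
  induction m, hm using Nat.le_induction with
  | base =>
    rw [show Finset.Icc 1 1 = {1} from rfl, Finset.sum_singleton]
    have h := geg_step lam h0 hpos 1
    have e1 : (1 : ℕ) + 2 = 2 * 1 + 1 := by norm_num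
    rw [e1] at h
    convert h using 3 <;> push_cast <;> ring
  | succ p hp ih =>
    rw [Finset.sum_Icc_succ_top (by omega : 1 ≤ p + 1)]
    have hstep := geg_step lam h0 hpos (2 * p + 1)
    have e1 : 2 * p + 1 + 2 = 2 * (p + 1) + 1 := by ring
    rw [e1] at hstep
    have ecast : (((2 * p + 1 : ℕ) : ℝ) + 2 + lam) / (2 * lam ^ 2)
        = (2 * ((p : ℝ) + 1) + 1 + lam) / (2 * lam ^ 2) := by
      push_cast; ring
    rw [ecast] at hstep
    push_cast at ih hstep ⊢
    linarith
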